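/- arXiv:1809.04495 — 4 statements merged into one kernel-verified Lean document; each statement's English description precedes it below -/
import Mathlib

section
/- Let 0 < Δτ < 1 and define sequences of real numbers by e^{(x)}_{n+1} = e^{(x)}_n - Δτ e^{(p)}_n and e^{(p)}_{n+1} = (1 - 2Δτ) e^{(p)}_n + Δτ e^{(x)}_n, with e^{(p)}_0 = 0. Then for all n ≥ 1, e^{(x)}_n = e^{(x)}_0 (1-Δτ)^{n-1}(1 + (n-1)Δτ) and e^{(p)}_n = n e^{(x)}_0 Δτ (1-Δτ)^{n-1}. -/
theorem stmt_5 (Δτ : ℝ) (h0 : 0 < Δτ) (h1 : Δτ < 1)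
    (ex ep : ℕ → ℝ) (hp0 : ep 0 = 0)
    (hx : ∀ n, ex (n + 1) = ex n - Δτ * ep n)
    (hp : ∀ n, ep (n + 1) = (1 - 2 * Δτ) * ep n + Δτ * ex n) :
    ∀ n ≥ 1, ex n = ex 0 * (1 - Δτ) ^ (n - 1) * (1 + (n - 1 : ℕ) * Δτ) ∧
      ep n = (n : ℝ) * ex 0 * Δτ * (1 - Δτ) ^ (n - 1) := by
  intro n hn
  induction n, hn using Nat.le_induction with
  | base => refine ⟨by simp [hx 0, hp0], by simp [hp 0, hp0]; ring⟩
  | succ n hn ih =>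
    obtain ⟨k, rfl⟩ := Nat.exists_eq_add_of_le hn
    obtain ⟨ihx, ihp⟩ := ih
    constructor
    · rw [hx, ihx, ihp]
      simp only [Nat.add_sub_cancel_left, Nat.add_sub_cancel]
      push_cast
      ring
    · rw [hp, ihx, ihp]
      simp only [Nat.add_sub_cancel_left, Nat.add_sub_cancel]
      push_cast
      ring
end

section
/- Let A, B, C, D be N×N matrices over a field with AB = BA. Then det([[A,B],[C,D]]) = det(DA - CB). -/
open Matrix Polynomial

theorem silv_inv {n : Type*} [Fintype n] [DecidableEq n] {R : Type*} [CommRing R]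
    (A B C D : Matrix n n R) [Invertible A] (hcomm : A * B = B * A) :
    (fromBlocks A B C D).det = (D * A - C * B).det := by
  rw [det_fromBlocks₁₁, mul_comm, ← det_mul, sub_mul]
  congr 1
  rw [Matrix.mul_assoc (C * ⅟A), ← hcomm, Matrix.mul_assoc C, invOf_mul_cancel_left]

/-- Silvester's block determinant formula over a field, without invertibility of `A`. -/
theorem stmt_8 (N : ℕ) (K : Type*) [Field K]
    (A B C D : Matrix (Fin N) (Fin N) K) (hcomm : A * B = B * A) :
    (Matrix.fromBlocks A B C D).det = (D * A - C * B).det := by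
  classical
  let Cm : K →+* K[X] := Polynomial.C
  let A₁ : Matrix (Fin N) (Fin N) K[X] := charmatrix (-A)
  let B₁ := Cm.mapMatrix B
  let C₁ := Cm.mapMatrix C
  let D₁ := Cm.mapMatrix D
  let ψ : K[X] →+* RatFunc K := algebraMap K[X] (RatFunc K)
  have hψinj : Function.Injective ψ := IsFractionRing.injective _ _
  have hAB : Commute A B := hcomm
  have h1 : Commute A₁ B₁ :=
    (Matrix.scalar_commute X (fun r => Commute.all _ _) _).sub_left
      ((hAB.neg_left).map Cm.mapMatrix)
  have hdet : (ψ.mapMatrix A₁).det ≠ 0 := by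
    rw [← RingHom.map_det]
    have : A₁.det = (-A).charpoly := rfl
    rw [this]
    intro h
    exact Matrix.charpoly_monic (-A) |>.ne_zero (hψinj (by simpa using h))
  haveI : Invertible (ψ.mapMatrix A₁) :=
    Matrix.invertibleOfIsUnitDet _ (isUnit_iff_ne_zero.2 hdet)
  have key : (Matrix.fromBlocks A₁ B₁ C₁ D₁).det = (D₁ * A₁ - C₁ * B₁).det := by
    apply hψinj
    rw [RingHom.map_det, RingHom.map_det, map_sub, _root_.map_mul, _root_.map_mul]
    have hfb : ψ.mapMatrix (Matrix.fromBlocks A₁ B₁ C₁ D₁) =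
        Matrix.fromBlocks (ψ.mapMatrix A₁) (ψ.mapMatrix B₁) (ψ.mapMatrix C₁) (ψ.mapMatrix D₁) := by
      simp [RingHom.mapMatrix_apply, Matrix.fromBlocks_map]
    rw [hfb]
    exact silv_inv _ _ _ _ (by rw [← _root_.map_mul, ← _root_.map_mul, h1.eq])
  let ev : K[X] →+* K := Polynomial.evalRingHom 0
  have hA : ev.mapMatrix A₁ = A := by
    ext i j
    simp [A₁, ev, charmatrix_apply, Matrix.diagonal, Cm]
    by_cases h : i = j <;> simp [h]
  have hB : ev.mapMatrix B₁ = B := by ext i j; simp [B₁, ev, Cm]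
  have hC : ev.mapMatrix C₁ = C := by ext i j; simp [C₁, ev, Cm]
  have hD : ev.mapMatrix D₁ = D := by ext i j; simp [D₁, ev, Cm]
  have := congrArg ev key
  rw [RingHom.map_det, RingHom.map_det, map_sub, _root_.map_mul, _root_.map_mul] at this
  have hfb : ev.mapMatrix (Matrix.fromBlocks A₁ B₁ C₁ D₁) =
      Matrix.fromBlocks (ev.mapMatrix A₁) (ev.mapMatrix B₁) (ev.mapMatrix C₁) (ev.mapMatrix D₁) := by
    simp [RingHom.mapMatrix_apply, Matrix.fromBlocks_map]
  rw [hfb, hA, hB, hC, hD] at this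
  exact this
end

section
/- Let J, X, Y be N×N real matrices with Y = X^{-1} J^{-1} (X and J invertible), and let 0 < Δτ < 1. Then every eigenvalue of the 2N×2N matrix W = [[I, -Δτ X],[Δτ Y J, (1-2Δτ) I]] equals 1 - Δτ. -/
/-- Every (complex) eigenvalue of the W4 error-propagation matrix
`W = [[I, -Δτ X], [Δτ Y J, (1-2Δτ) I]]` with `Y = X⁻¹ J⁻¹` equals `1 - Δτ`. -/
theorem stmt_9 (N : ℕ) (J X Y : Matrix (Fin N) (Fin N) ℝ)
    (hX : IsUnit X) (hJ : IsUnit J) (hY : Y = X⁻¹ * J⁻¹)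
    (Δτ : ℝ) (h0 : 0 < Δτ) (h1 : Δτ < 1) :
    ∀ μ : ℂ,
      μ ∈ spectrum ℂ
        ((Matrix.fromBlocks (1 : Matrix (Fin N) (Fin N) ℝ) (-Δτ • X)
            (Δτ • (Y * J)) ((1 - 2 * Δτ) • (1 : Matrix (Fin N) (Fin N) ℝ))).map
          (algebraMap ℝ ℂ)) →
      μ = 1 - Δτ := by
  intro μ hμ
  by_contra hne
  -- basic inverses
  have hXd : IsUnit X.det := (Matrix.isUnit_iff_isUnit_det X).mp hX
  have hJd : IsUnit J.det := (Matrix.isUnit_iff_isUnit_det J).mp hJ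
  have hYJ : Y * J = X⁻¹ := by
    rw [hY, Matrix.mul_assoc, Matrix.nonsing_inv_mul J hJd, Matrix.mul_one]
  set W : Matrix (Fin N ⊕ Fin N) (Fin N ⊕ Fin N) ℝ :=
    Matrix.fromBlocks (1 : Matrix (Fin N) (Fin N) ℝ) (-Δτ • X)
      (Δτ • (Y * J)) ((1 - 2 * Δτ) • (1 : Matrix (Fin N) (Fin N) ℝ)) with hW
  -- nilpotency over ℝ
  have hkey : (W - (1 - Δτ) • 1) * (W - (1 - Δτ) • 1) = 0 := by
    have h1' : (1 : Matrix (Fin N ⊕ Fin N) (Fin N ⊕ Fin N) ℝ) =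
        Matrix.fromBlocks 1 0 0 1 := (Matrix.fromBlocks_one).symm
    have hsub : W - (1 - Δτ) • 1 =
        Matrix.fromBlocks (Δτ • 1) (-Δτ • X) (Δτ • X⁻¹) (-Δτ • 1) := by
      rw [hW, hYJ, h1', sub_eq_add_neg, Matrix.fromBlocks_smul, Matrix.fromBlocks_neg,
        Matrix.fromBlocks_add]
      have b11 : (1 : Matrix (Fin N) (Fin N) ℝ) + -((1 - Δτ) • 1) = Δτ • 1 := by module
      have b12 : -Δτ • X + -((1 - Δτ) • (0 : Matrix (Fin N) (Fin N) ℝ)) = -Δτ • X := by module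
      have b21 : Δτ • X⁻¹ + -((1 - Δτ) • (0 : Matrix (Fin N) (Fin N) ℝ)) = Δτ • X⁻¹ := by module
      have b22 : (1 - 2 * Δτ) • (1 : Matrix (Fin N) (Fin N) ℝ) + -((1 - Δτ) • 1) = -Δτ • 1 := by
        module
      rw [b11, b12, b21, b22]
    rw [hsub, Matrix.fromBlocks_multiply]
    have hxx : X * X⁻¹ = 1 := Matrix.mul_nonsing_inv X hXd
    have hxx' : X⁻¹ * X = 1 := Matrix.nonsing_inv_mul X hXd
    have e11 : Δτ • (1 : Matrix (Fin N) (Fin N) ℝ) * (Δτ • 1) + -Δτ • X * (Δτ • X⁻¹) = 0 := by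
      simp [Matrix.smul_mul, Matrix.mul_smul, hxx, smul_smul]
    have e12 : Δτ • (1 : Matrix (Fin N) (Fin N) ℝ) * (-Δτ • X) + -Δτ • X * (-Δτ • 1) = 0 := by
      simp [Matrix.smul_mul, Matrix.mul_smul, smul_smul]
    have e21 : Δτ • X⁻¹ * (Δτ • (1 : Matrix (Fin N) (Fin N) ℝ)) + -Δτ • 1 * (Δτ • X⁻¹) = 0 := by
      simp [Matrix.smul_mul, Matrix.mul_smul, smul_smul]
    have e22 : Δτ • X⁻¹ * (-Δτ • X) + -Δτ • (1 : Matrix (Fin N) (Fin N) ℝ) * (-Δτ • 1) = 0 := by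
      simp [Matrix.smul_mul, Matrix.mul_smul, hxx', smul_smul]
    rw [e11, e12, e21, e22, Matrix.fromBlocks_zero]
  -- transfer to ℂ
  set f : Matrix (Fin N ⊕ Fin N) (Fin N ⊕ Fin N) ℝ →+* Matrix (Fin N ⊕ Fin N) (Fin N ⊕ Fin N) ℂ :=
    (algebraMap ℝ ℂ).mapMatrix with hf
  set A := W.map (algebraMap ℝ ℂ) with hA
  have hAf : A = f W := rfl
  set c : ℂ := 1 - (Δτ : ℂ) with hc
  have hc1 : f ((1 - Δτ) • (1 : Matrix (Fin N ⊕ Fin N) (Fin N ⊕ Fin N) ℝ)) = c • 1 := by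
    ext i j
    simp [hf, Matrix.one_apply, hc]
    split <;> simp
  set Nm : Matrix (Fin N ⊕ Fin N) (Fin N ⊕ Fin N) ℂ := A - c • 1 with hNm
  have hN2 : Nm * Nm = 0 := by
    have := congrArg f hkey
    rw [map_mul, map_sub, ← hAf, hc1, map_zero] at this
    simpa [hNm] using this
  set ν : ℂ := μ - c with hν
  have hν0 : ν ≠ 0 := sub_ne_zero.mpr (by simpa [hc] using hne)
  have hunit : IsUnit (algebraMap ℂ (Matrix (Fin N ⊕ Fin N) (Fin N ⊕ Fin N) ℂ) μ - A) := by
    have heq : algebraMap ℂ (Matrix (Fin N ⊕ Fin N) (Fin N ⊕ Fin N) ℂ) μ - A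
        = ν • 1 - Nm := by
      rw [Algebra.algebraMap_eq_smul_one, hNm, hν, sub_smul]
      abel
    rw [heq]
    have expand : (ν • 1 - Nm) * (ν • 1 + Nm) = (ν * ν) • 1 := by
      simp only [sub_mul, mul_add, Matrix.smul_mul, Matrix.mul_smul, Matrix.one_mul,
        Matrix.mul_one, hN2, smul_smul, smul_zero]
      abel
    have h2 : (ν • 1 - Nm) * ((ν * ν)⁻¹ • (ν • 1 + Nm)) = 1 := by
      rw [Matrix.mul_smul, expand, smul_smul, inv_mul_cancel₀ (mul_ne_zero hν0 hν0), one_smul]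
    exact ⟨⟨_, _, h2, mul_eq_one_comm.mp h2⟩, rfl⟩
  exact (spectrum.mem_iff.mp hμ) hunit
end

section
/- Let J, X be N×N real invertible matrices, Y = X^{-1}J^{-1}, 0 < Δτ < 1, and W = [[I, -Δτ X],[Δτ Y J, (1-2Δτ) I]]. Then for every vector e_0 ∈ ℝ^{2N}, the sequence e_n := W^n e_0 converges to 0. -/
open Matrix Filter

/-- Powers of the W4 error-propagation matrix applied to any vector converge to zero. -/
theorem stmt_10 (N : ℕ) (J X Y : Matrix (Fin N) (Fin N) ℝ)
    (hX : IsUnit X) (hJ : IsUnit J) (hY : Y = X⁻¹ * J⁻¹)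
    (Δτ : ℝ) (h0 : 0 < Δτ) (h1 : Δτ < 1)
    (W : Matrix (Fin N ⊕ Fin N) (Fin N ⊕ Fin N) ℝ)
    (hW : W = Matrix.fromBlocks (1 : Matrix (Fin N) (Fin N) ℝ) (-Δτ • X)
        (Δτ • (Y * J)) ((1 - 2 * Δτ) • (1 : Matrix (Fin N) (Fin N) ℝ)))
    (e0 : Fin N ⊕ Fin N → ℝ) :
    Filter.Tendsto (fun n : ℕ => (W ^ n).mulVec e0) Filter.atTop (nhds 0) := by
  have hXdet : IsUnit X.det := (Matrix.isUnit_iff_isUnit_det X).mp hX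
  have hJdet : IsUnit J.det := (Matrix.isUnit_iff_isUnit_det J).mp hJ
  have hYJ : Y * J = X⁻¹ := by
    rw [hY, mul_assoc, Matrix.nonsing_inv_mul J hJdet, mul_one]
  set a : ℝ := 1 - Δτ with ha
  set M : Matrix (Fin N ⊕ Fin N) (Fin N ⊕ Fin N) ℝ :=
    Matrix.fromBlocks 1 (-X) X⁻¹ (-1) with hM
  have hM2 : M * M = 0 := by
    rw [hM, Matrix.fromBlocks_multiply]
    simp [Matrix.mul_nonsing_inv X hXdet, Matrix.nonsing_inv_mul X hXdet]
  have hWdec : W = a • (1 : Matrix (Fin N ⊕ Fin N) (Fin N ⊕ Fin N) ℝ) + Δτ • M := by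
    rw [hW, hM, hYJ, ← Matrix.fromBlocks_one, Matrix.fromBlocks_smul,
      Matrix.fromBlocks_smul, Matrix.fromBlocks_add]
    refine Matrix.fromBlocks_inj.mpr ⟨?_, ?_, ?_, ?_⟩ <;> rw [ha] <;> module
  have hpow : ∀ n : ℕ, W ^ n = (a ^ n) • (1 : Matrix (Fin N ⊕ Fin N) (Fin N ⊕ Fin N) ℝ)
      + ((n : ℝ) * a ^ (n - 1) * Δτ) • M := by
    intro n
    induction n with
    | zero => simp
    | succ n ih =>
      rw [pow_succ, ih, hWdec]
      simp only [add_mul, mul_add, smul_mul_assoc, Matrix.mul_smul, one_mul,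
        mul_one, hM2, smul_zero, add_zero, zero_add, smul_smul]
      rw [add_assoc, ← add_smul]
      congr 1
      cases n with
      | zero => simp
      | succ m =>
        simp only [Nat.add_sub_cancel]
        push_cast
        ring_nf
  have hapos : (0:ℝ) ≤ a := by simp [ha]; linarith
  have halt : a < 1 := by simp [ha]; linarith
  have hane : a ≠ 0 := by simp [ha]; linarith
  have t1 : Tendsto (fun n : ℕ => (a ^ n) • e0) atTop (nhds 0) := by
    simpa using (tendsto_pow_atTop_nhds_zero_of_lt_one hapos halt).smul_const e0
  have t2 : Tendsto (fun n : ℕ => ((n : ℝ) * a ^ (n - 1) * Δτ) • M.mulVec e0)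
      atTop (nhds 0) := by
    have key : Tendsto (fun n : ℕ => (n : ℝ) * a ^ (n - 1) * Δτ) atTop (nhds 0) := by
      have h := (((tendsto_self_mul_const_pow_of_lt_one hapos halt).div_const a).mul_const Δτ)
      simp only [zero_div, zero_mul] at h
      refine h.congr fun n => ?_
      cases n with
      | zero => simp
      | succ m =>
        simp only [Nat.add_sub_cancel]
        rw [pow_succ]
        field_simp
    simpa using key.smul_const (M.mulVec e0)
  have := t1.add t2
  simp only [add_zero] at this
  refine this.congr fun n => ?_
  rw [hpow n, Matrix.add_mulVec, Matrix.smul_mulVec, Matrix.smul_mulVec,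
    Matrix.one_mulVec]
end
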